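/- Let n ≥ 1 and let p, q : {0,1}^n → [0,1] be probability mass functions (Σ_v p(v) = Σ_w q(w) = 1). Let H(p) = −Σ_v p(v) log p(v) and H(q) = −Σ_w q(w) log q(w) (with 0·log 0 = 0), and let E = Σ_{v,w ∈ {0,1}^n} p(v) q(w) d(v,w) be the expected Hamming distance between independent samples from p and q. Then n·( h⁻¹(H(p)/n) * h⁻¹(H(q)/n) ) ≤ E ≤ n·( 1 − h⁻¹(H(p)/n) * h⁻¹(H(q)/n) ). -/

import Mathlib

open Finset Asymptotics Filter

/-- Binary entropy function (base-2 logarithms). -/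
noncomputable def binEnt (p : ℝ) : ℝ :=
  -(p * Real.logb 2 p) - (1 - p) * Real.logb 2 (1 - p)

/-- Inverse of the binary entropy function restricted to `[0, 1/2]`. -/
noncomputable def binEntInv (x : ℝ) : ℝ :=
  sSup {p : ℝ | p ∈ Set.Icc (0:ℝ) (1/2) ∧ binEnt p ≤ x}

/-- `p*q = p(1-q) + q(1-p)`. -/
def pstar (p q : ℝ) : ℝ := p * (1 - q) + q * (1 - p)

/-- Probability of the rectangle `A × B` for `ρ`-correlated uniform binary strings. -/
noncomputable def Pxy (n : ℕ) (ρ : ℝ) (A B : Finset (Fin n → Bool)) : ℝ :=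
  ∑ a ∈ A, ∑ b ∈ B,
    (2:ℝ)⁻¹ ^ n * ((1 + ρ)/2) ^ n * ((1 - ρ)/(1 + ρ)) ^ (hammingDist a b)

/-- Hamming sphere of radius `j` around the all-zeros string in `{0,1}^n`. -/
def hSphere (n j : ℕ) : Finset (Fin n → Bool) :=
  Finset.univ.filter (fun x => (Finset.univ.filter (fun i => x i = true)).card = j)

/-- The exponent function `w_d(α,β)`. -/
noncomputable def wd (α β d : ℝ) : ℝ :=
  α + binEntInv α * binEnt (1/2 + (binEntInv β - d)/(2 * binEntInv α))
    + (1 - binEntInv α) * binEnt (1/2 + (d - (1 - binEntInv β))/(2 * (1 - binEntInv α)))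

/-- The noise operator `T_ρ`. -/
noncomputable def Tnoise (n : ℕ) (ρ : ℝ) (f : (Fin n → Bool) → ℝ) (y : Fin n → Bool) : ℝ :=
  ∑ x : Fin n → Bool,
    f x * ((1 + ρ)/2) ^ (n - hammingDist x y) * ((1 - ρ)/2) ^ (hammingDist x y)

/-- The normalized `p`-norm on functions on the hypercube. -/
noncomputable def pNorm (n : ℕ) (p : ℝ) (f : (Fin n → Bool) → ℝ) : ℝ :=
  ((2:ℝ)⁻¹ ^ n * ∑ x : Fin n → Bool, |f x| ^ p) ^ (1/p)

/-- Indicator function of a set `A ⊆ {0,1}^n`. -/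
def indA (n : ℕ) (A : Finset (Fin n → Bool)) : (Fin n → Bool) → ℝ :=
  fun x => if x ∈ A then 1 else 0

open Real Set

/-!
Let `P i`, `Q i` be the probabilities that coordinate `i` is `true` under `p` and `q`.
By linearity `E = ∑ i, pstar (P i) (Q i) = n / 2 - (∑ i, (1 - 2 P i) (1 - 2 Q i)) / 2`, so by
Cauchy–Schwarz it suffices to show `∑ i, (1 - 2 P i)² ≤ n (1 - 2 h⁻¹(H(p) / n))²`.
Subadditivity of entropy gives `H(p) ≤ ∑ i, h(P i)`, and `h(P i) = m((1 - 2 P i)²)` for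
`m u = h((1 - √u) / 2)`. The function `m` is concave because `artanh v / v` increases on
`(0, 1)`, so Jensen's inequality bounds `H(p) / n` by `m` of the mean of the `(1 - 2 P i)²`;
inverting the entropy turns this into the required bound.
-/

lemma binEnt_eq_binEntropy_div (x : ℝ) : binEnt x = binEntropy x / log 2 := by
  simp only [binEnt, binEntropy, logb, log_inv]
  ring

lemma binEnt_strictMonoOn : StrictMonoOn binEnt (Icc 0 (1 / 2)) := by
  intro x hx y hy hxy
  simp only [binEnt_eq_binEntropy_div]
  rw [one_div] at hx hy
  exact div_lt_div_of_pos_right (binEntropy_strictMonoOn hx hy hxy) (log_pos one_lt_two)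

-- For `x < 0` the defining set is empty and `sSup ∅ = 0`.
lemma binEntInv_mem_Icc (x : ℝ) : binEntInv x ∈ Icc (0 : ℝ) (1 / 2) :=
  ⟨Real.sSup_nonneg fun _ hz => hz.1.1, Real.sSup_le (fun _ hz => hz.1.2) (by norm_num)⟩

lemma binEntInv_le_of_le_binEnt {x y : ℝ} (hy : y ∈ Icc (0 : ℝ) (1 / 2)) (h : x ≤ binEnt y) :
    binEntInv x ≤ y :=
  Real.sSup_le (fun _ hz => (binEnt_strictMonoOn.le_iff_le hz.1 hy).1 (hz.2.trans h)) hy.1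

lemma le_sq_one_sub_two_mul_binEntInv {x u : ℝ} (hu : u ∈ Icc (0 : ℝ) 1)
    (h : x ≤ binEnt ((1 - √u) / 2)) : u ≤ (1 - 2 * binEntInv x) ^ 2 := by
  have hsqrt : √u ≤ 1 := sqrt_le_one.2 hu.2
  have := binEntInv_le_of_le_binEnt ⟨by linarith, by linarith [sqrt_nonneg u]⟩ h
  calc u = √u ^ 2 := (sq_sqrt hu.1).symm
    _ ≤ (1 - 2 * binEntInv x) ^ 2 := by gcongr; linarith

lemma monotoneOn_log_one_add_sub_log_one_sub_div :
    MonotoneOn (fun v => (log (1 + v) - log (1 - v)) / v) (Ioo 0 1) := by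
  have series {x : ℝ} (hx : x ∈ Ioo (0 : ℝ) 1) :
      HasSum (fun k : ℕ => 2 * (1 / (2 * k + 1)) * x ^ (2 * k))
        ((log (1 + x) - log (1 - x)) / x) := by
    have h := (hasSum_log_sub_log_of_abs_lt_one (abs_lt.2 ⟨by linarith [hx.1], hx.2⟩)).div_const x
    have e : (fun k : ℕ => 2 * (1 / (2 * k + 1)) * x ^ (2 * k + 1) / x)
        = fun k : ℕ => 2 * (1 / (2 * k + 1)) * x ^ (2 * k) := by
      funext k
      rw [pow_succ]
      field_simp [hx.1.ne']
    rwa [e] at h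
  intro v hv w hw hvw
  refine hasSum_le (fun k => ?_) (series hv) (series hw)
  gcongr
  exact hv.1.le

lemma sqrt_mem_Ioo_of_mem_Ioo {u : ℝ} (hu : u ∈ Ioo (0 : ℝ) 1) : √u ∈ Ioo (0 : ℝ) 1 :=
  ⟨sqrt_pos.2 hu.1, (sqrt_lt' one_pos).2 (by simpa using hu.2)⟩

lemma hasDerivAt_binEntropy_one_sub_sqrt_div_two {u : ℝ} (hu : u ∈ Ioo (0 : ℝ) 1) :
    HasDerivAt (fun u => binEntropy ((1 - √u) / 2))
      (-((log (1 + √u) - log (1 - √u)) / √u) / 4) u := by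
  obtain ⟨hv0, hv1⟩ := sqrt_mem_Ioo_of_mem_Ioo hu
  have inner : HasDerivAt (fun u => (1 - √u) / 2) (-(1 / (2 * √u)) / 2) u := by
    simpa using ((hasDerivAt_sqrt hu.1.ne').const_sub 1).div_const 2
  refine ((hasDerivAt_binEntropy (p := (1 - √u) / 2) (by linarith) (by linarith)).comp u
    inner).congr_deriv ?_
  rw [show 1 - (1 - √u) / 2 = (1 + √u) / 2 by ring, log_div (by linarith) two_ne_zero,
    log_div (by linarith) two_ne_zero]
  field_simp
  ring

lemma concaveOn_binEntropy_one_sub_sqrt_div_two :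
    ConcaveOn ℝ (Icc 0 1) (fun u => binEntropy ((1 - √u) / 2)) := by
  refine AntitoneOn.concaveOn_of_deriv (convex_Icc 0 1) (by fun_prop) ?_ ?_ <;> rw [interior_Icc]
  · exact fun u hu =>
      (hasDerivAt_binEntropy_one_sub_sqrt_div_two hu).differentiableAt.differentiableWithinAt
  · intro u hu w hw huw
    rw [(hasDerivAt_binEntropy_one_sub_sqrt_div_two hu).deriv,
      (hasDerivAt_binEntropy_one_sub_sqrt_div_two hw).deriv]
    have := monotoneOn_log_one_add_sub_log_one_sub_div (sqrt_mem_Ioo_of_mem_Ioo hu)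
      (sqrt_mem_Ioo_of_mem_Ioo hw) (sqrt_le_sqrt huw)
    simp only at this
    linarith

lemma binEntropy_eq_binEntropy_one_sub_sqrt_sq (x : ℝ) :
    binEntropy x = binEntropy ((1 - √((1 - 2 * x) ^ 2)) / 2) := by
  rw [sqrt_sq_eq_abs]
  rcases le_total 0 (1 - 2 * x) with h | h
  · rw [abs_of_nonneg h]
    ring_nf
  · rw [abs_of_nonpos h, ← binEntropy_one_sub]
    ring_nf

lemma sum_mul_log_le_sum_mul_log {α : Type*} [Fintype α] {p r : α → ℝ} (hp : ∀ a, 0 ≤ p a)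
    (hr0 : ∀ a, 0 ≤ r a) (hr : ∀ a, 0 < p a → 0 < r a) (hsum : ∑ a, r a ≤ ∑ a, p a) :
    ∑ a, p a * log (r a) ≤ ∑ a, p a * log (p a) := by
  have term (a : α) : p a * log (r a) - p a * log (p a) ≤ r a - p a := by
    rcases (hp a).eq_or_lt with h | h
    · simp [← h, hr0 a]
    calc p a * log (r a) - p a * log (p a) = p a * log (r a / p a) := by
          rw [log_div (hr a h).ne' h.ne']
          ring
      _ ≤ p a * (r a / p a - 1) := by gcongr; exact log_le_sub_one_of_pos (div_pos (hr a h) h)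
      _ = r a - p a := by field_simp
  have := sum_le_sum fun a (_ : a ∈ Finset.univ) => term a
  simp only [sum_sub_distrib] at this
  linarith

lemma abs_sum_mul_le_of_sum_sq_le {ι : Type*} (s : Finset ι) {f g : ι → ℝ} {a b c : ℝ}
    (ha : 0 ≤ a) (hb : 0 ≤ b) (hc : 0 ≤ c) (hf : ∑ i ∈ s, f i ^ 2 ≤ c * a ^ 2)
    (hg : ∑ i ∈ s, g i ^ 2 ≤ c * b ^ 2) : |∑ i ∈ s, f i * g i| ≤ c * (a * b) := by
  refine abs_le_of_sq_le_sq ?_ (by positivity)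
  calc (∑ i ∈ s, f i * g i) ^ 2 ≤ (∑ i ∈ s, f i ^ 2) * ∑ i ∈ s, g i ^ 2 :=
        sum_mul_sq_le_sq_mul_sq _ _ _
    _ ≤ (c * a ^ 2) * (c * b ^ 2) :=
        mul_le_mul hf hg (sum_nonneg fun _ _ => sq_nonneg _) (by positivity)
    _ = (c * (a * b)) ^ 2 := by ring

section Marginal

variable {ι : Type*} [Fintype ι] [DecidableEq ι] {p : (ι → Bool) → ℝ}

noncomputable def marginal (p : (ι → Bool) → ℝ) (i : ι) (b : Bool) : ℝ :=
  ∑ v with v i = b, p v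

lemma sum_mul_apply_eq_sum_marginal (p : (ι → Bool) → ℝ) (i : ι) (f : Bool → ℝ) :
    ∑ v, p v * f (v i) = ∑ b, marginal p i b * f b := by
  simp only [marginal, sum_mul]
  rw [← sum_fiberwise univ (fun v => v i)]
  exact sum_congr rfl fun b _ => sum_congr rfl fun v hv => by rw [(mem_filter.1 hv).2]

lemma marginal_nonneg (hp : ∀ v, 0 ≤ p v) (i : ι) (b : Bool) : 0 ≤ marginal p i b :=
  sum_nonneg fun v _ => hp v

lemma le_marginal (hp : ∀ v, 0 ≤ p v) (i : ι) (v : ι → Bool) : p v ≤ marginal p i (v i) :=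
  single_le_sum (f := p) (fun w _ => hp w) (by simp)

lemma marginal_false (hps : ∑ v, p v = 1) (i : ι) :
    marginal p i false = 1 - marginal p i true := by
  have := sum_mul_apply_eq_sum_marginal p i fun _ => 1
  simp only [mul_one, hps, Fintype.sum_bool] at this
  linarith

lemma marginal_true_mem_Icc (hp : ∀ v, 0 ≤ p v) (hps : ∑ v, p v = 1) (i : ι) :
    marginal p i true ∈ Icc (0 : ℝ) 1 :=
  ⟨marginal_nonneg hp i true, by linarith [marginal_false hps i, marginal_nonneg hp i false]⟩

-- Subadditivity of entropy: Gibbs' inequality against the product of the marginals.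
lemma sum_negMulLog_le_sum_binEntropy_marginal (hp : ∀ v, 0 ≤ p v) (hps : ∑ v, p v = 1) :
    ∑ v, negMulLog (p v) ≤ ∑ i, binEntropy (marginal p i true) := by
  set r : (ι → Bool) → ℝ := fun v => ∏ i, marginal p i (v i)
  have hr0 (v) : 0 ≤ r v := prod_nonneg fun i _ => marginal_nonneg hp i _
  have hr (v) (hv : 0 < p v) : 0 < r v := prod_pos fun i _ => hv.trans_le (le_marginal hp i v)
  have hrs : ∑ v, r v = ∑ v, p v := by
    rw [hps, ← Fintype.prod_sum]
    exact prod_eq_one fun i _ => by rw [Fintype.sum_bool, marginal_false hps]; ring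
  have cross : ∑ v, p v * log (r v) = -∑ i, binEntropy (marginal p i true) := by
    calc ∑ v, p v * log (r v) = ∑ v, ∑ i, p v * log (marginal p i (v i)) := by
          refine sum_congr rfl fun v _ => ?_
          rcases (hp v).eq_or_lt with h | h
          · simp [← h]
          rw [log_prod fun i _ => (h.trans_le (le_marginal hp i v)).ne', mul_sum]
      _ = ∑ i, ∑ b, marginal p i b * log (marginal p i b) := by
          rw [sum_comm]
          exact sum_congr rfl fun i _ =>
            sum_mul_apply_eq_sum_marginal p i fun b => log (marginal p i b)
      _ = -∑ i, binEntropy (marginal p i true) := by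
          simp only [Fintype.sum_bool, marginal_false hps, binEntropy, log_inv, ← sum_neg_distrib]
          exact sum_congr rfl fun i _ => by ring
  have := sum_mul_log_le_sum_mul_log hp hr0 hr hrs.le
  simp only [negMulLog, neg_mul, sum_neg_distrib]
  linarith

lemma sum_sum_mul_hammingDist {q : (ι → Bool) → ℝ} (hps : ∑ v, p v = 1) (hqs : ∑ w, q w = 1) :
    ∑ v, ∑ w, p v * q w * (hammingDist v w : ℝ)
      = ∑ i, pstar (marginal p i true) (marginal q i true) := by
  have hd (v w : ι → Bool) : (hammingDist v w : ℝ) = ∑ i, if v i = w i then 0 else 1 := by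
    simp [hammingDist, card_filter]
  calc ∑ v, ∑ w, p v * q w * (hammingDist v w : ℝ)
      = ∑ i, ∑ v, p v * ∑ w, q w * (if v i = w i then 0 else 1) := by
        simp only [hd, mul_sum, ← mul_assoc]
        exact (sum_congr rfl fun v _ => sum_comm).trans sum_comm
    _ = ∑ i, ∑ b, marginal p i b * ∑ c, marginal q i c * (if b = c then 0 else 1) := by
        refine sum_congr rfl fun i _ => ?_
        rw [← sum_mul_apply_eq_sum_marginal p i]
        exact sum_congr rfl fun v _ => by
          rw [sum_mul_apply_eq_sum_marginal q i fun c => if v i = c then 0 else 1]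
    _ = ∑ i, pstar (marginal p i true) (marginal q i true) := by
        refine sum_congr rfl fun i _ => ?_
        simp only [Fintype.sum_bool, marginal_false hps, marginal_false hqs, pstar, if_true,
          Bool.true_eq_false, Bool.false_eq_true, if_false]
        ring

lemma sum_sq_one_sub_two_mul_marginal_le (hp : ∀ v, 0 ≤ p v) (hps : ∑ v, p v = 1) :
    ∑ i, (1 - 2 * marginal p i true) ^ 2 ≤ Fintype.card ι *
      (1 - 2 * binEntInv ((-∑ v, p v * logb 2 (p v)) / Fintype.card ι)) ^ 2 := by
  rcases isEmpty_or_nonempty ι with hι | hι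
  · simp
  set n : ℝ := (Fintype.card ι : ℝ)
  have hn : 0 < n := Nat.cast_pos.2 Fintype.card_pos
  set u : ι → ℝ := fun i => (1 - 2 * marginal p i true) ^ 2
  have hu (i : ι) : u i ∈ Icc (0 : ℝ) 1 := by
    have := marginal_true_mem_Icc hp hps i
    exact ⟨sq_nonneg _, by nlinarith [this.1, this.2]⟩
  have hw0 : ∀ i ∈ (Finset.univ : Finset ι), (0 : ℝ) ≤ n⁻¹ := fun _ _ => by positivity
  have hw1 : ∑ _i : ι, n⁻¹ = 1 := by simp [n, hn.ne']
  have hmean : ∑ i, n⁻¹ • u i = (∑ i, u i) / n := by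
    rw [← smul_sum, smul_eq_mul, inv_mul_eq_div]
  have hentropy : -∑ v, p v * logb 2 (p v) ≤ n * binEnt ((1 - √((∑ i, u i) / n)) / 2) := by
    calc -∑ v, p v * logb 2 (p v) = (∑ v, negMulLog (p v)) / log 2 := by
          simp only [negMulLog, logb, sum_div, ← sum_neg_distrib]
          exact sum_congr rfl fun v _ => by ring
      _ ≤ (∑ i, binEntropy (marginal p i true)) / log 2 := by
          gcongr
          exact sum_negMulLog_le_sum_binEntropy_marginal hp hps
      _ = n * (∑ i, n⁻¹ • binEntropy ((1 - √(u i)) / 2)) / log 2 := by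
          rw [← smul_sum, smul_eq_mul, mul_inv_cancel_left₀ hn.ne']
          simp only [u, ← binEntropy_eq_binEntropy_one_sub_sqrt_sq]
      _ ≤ n * binEntropy ((1 - √(∑ i, n⁻¹ • u i)) / 2) / log 2 := by
          gcongr
          exact concaveOn_binEntropy_one_sub_sqrt_div_two.le_map_sum hw0 hw1 fun i _ => hu i
      _ = n * binEnt ((1 - √((∑ i, u i) / n)) / 2) := by
          rw [hmean, binEnt_eq_binEntropy_div, mul_div_assoc]
  have := le_sq_one_sub_two_mul_binEntInv (hmean ▸ (convex_Icc (0 : ℝ) 1).sum_mem hw0 hw1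
    fun i _ => hu i) ((div_le_iff₀' hn).2 hentropy)
  rwa [div_le_iff₀' hn] at this

end Marginal

theorem stmt_15_general (n : ℕ) (p q : (Fin n → Bool) → ℝ)
    (hp0 : ∀ v, 0 ≤ p v) (hps : ∑ v : Fin n → Bool, p v = 1)
    (hq0 : ∀ w, 0 ≤ q w) (hqs : ∑ w : Fin n → Bool, q w = 1) :
    (n:ℝ) * pstar (binEntInv ((-∑ v : Fin n → Bool, p v * Real.logb 2 (p v)) / n))
                  (binEntInv ((-∑ w : Fin n → Bool, q w * Real.logb 2 (q w)) / n))
      ≤ ∑ v : Fin n → Bool, ∑ w : Fin n → Bool, p v * q w * (hammingDist v w : ℝ) ∧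
    ∑ v : Fin n → Bool, ∑ w : Fin n → Bool, p v * q w * (hammingDist v w : ℝ)
      ≤ (n:ℝ) * (1 - pstar (binEntInv ((-∑ v : Fin n → Bool, p v * Real.logb 2 (p v)) / n))
                           (binEntInv ((-∑ w : Fin n → Bool, q w * Real.logb 2 (q w)) / n))) := by
  set a := binEntInv ((-∑ v : Fin n → Bool, p v * Real.logb 2 (p v)) / n)
  set b := binEntInv ((-∑ w : Fin n → Bool, q w * Real.logb 2 (q w)) / n)
  have ha : a ≤ 1 / 2 := (binEntInv_mem_Icc _).2
  have hb : b ≤ 1 / 2 := (binEntInv_mem_Icc _).2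
  have hcorr := abs_sum_mul_le_of_sum_sq_le Finset.univ
    (f := fun i => 1 - 2 * marginal p i true) (g := fun i => 1 - 2 * marginal q i true)
    (by linarith : 0 ≤ 1 - 2 * a) (by linarith : 0 ≤ 1 - 2 * b) n.cast_nonneg
    (by simpa using sum_sq_one_sub_two_mul_marginal_le hp0 hps)
    (by simpa using sum_sq_one_sub_two_mul_marginal_le hq0 hqs)
  have hpstar (x y : ℝ) : pstar x y = 1 / 2 - (1 - 2 * x) * (1 - 2 * y) / 2 := by
    unfold pstar
    ring
  have hE : ∑ i, pstar (marginal p i true) (marginal q i true)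
      = n / 2 - (∑ i, (1 - 2 * marginal p i true) * (1 - 2 * marginal q i true)) / 2 := by
    simp only [hpstar, sum_sub_distrib, ← sum_div, sum_const, Finset.card_univ,
      Fintype.card_fin, nsmul_eq_mul]
    ring
  rw [sum_sum_mul_hammingDist hps hqs, hE, hpstar]
  constructor <;> linarith [abs_le.1 hcorr]

/-- Lemma 1 (expected Hamming distance between independent samples,
bounded via entropies). -/
theorem stmt_15 (n : ℕ) (hn : 1 ≤ n) (p q : (Fin n → Bool) → ℝ)
    (hp0 : ∀ v, 0 ≤ p v) (hp1 : ∀ v, p v ≤ 1) (hps : ∑ v : Fin n → Bool, p v = 1)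
    (hq0 : ∀ w, 0 ≤ q w) (hq1 : ∀ w, q w ≤ 1) (hqs : ∑ w : Fin n → Bool, q w = 1) :
    (n:ℝ) * pstar (binEntInv ((-∑ v : Fin n → Bool, p v * Real.logb 2 (p v)) / n))
                  (binEntInv ((-∑ w : Fin n → Bool, q w * Real.logb 2 (q w)) / n))
      ≤ ∑ v : Fin n → Bool, ∑ w : Fin n → Bool, p v * q w * (hammingDist v w : ℝ) ∧
    ∑ v : Fin n → Bool, ∑ w : Fin n → Bool, p v * q w * (hammingDist v w : ℝ)
      ≤ (n:ℝ) * (1 - pstar (binEntInv ((-∑ v : Fin n → Bool, p v * Real.logb 2 (p v)) / n))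
                           (binEntInv ((-∑ w : Fin n → Bool, q w * Real.logb 2 (q w)) / n))) :=
  stmt_15_general n p q hp0 hps hq0 hqs
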